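/- For the one-dimensional harmonic oscillator with time-dependent frequency, with Hamiltonian h(t,q,p) = p²/2 + ω(t)² q²/2, the function I(q,p) with I = h₁h₃ − h₂² (where h₁ = q²/2, h₂ = −qp/2, h₃ = p²/2) is identically zero; for n ≥ 2, I(q,p) = (1/4) ∑_{1≤i<j≤n} (q_i p_j − q_j p_i)² Poisson-commutes with each of h₁ = (1/2)∑ q_i², h₂ = −(1/2)∑ q_i p_i, h₃ = (1/2)∑ p_i², and hence is a t-independent constant of the motion for the n-dimensional time-dependent isotropic harmonic oscillator. -/

import Mathlib

/-!
Under the Poisson bracket, `h₁, h₂, h₃` span a copy of `sl(2)`: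
`{h₁, h₂} = -h₁`, `{h₁, h₃} = -2 h₂`, `{h₂, h₃} = -h₃`. By Lagrange's identity `I = h₁ h₃ - h₂²`,
the Casimir element of this `sl(2)`, so the Leibniz rule gives `{I, hₖ} = 0` for each `k`,
and bilinearity extends this to the oscillator Hamiltonian `h₃ + ω(t)² h₁`.
-/

/-- Partial derivative of a function on `Fin k → ℝ` in the `i`-th coordinate. -/
noncomputable def pd {k : ℕ} (f : (Fin k → ℝ) → ℝ) (x : Fin k → ℝ) (i : Fin k) : ℝ :=
  deriv (fun t => f (Function.update x i t)) (x i)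

/-- Canonical Poisson bracket on `T*ℝⁿ`. -/
noncomputable def pbracket (n : ℕ) (f g : (Fin n → ℝ) → (Fin n → ℝ) → ℝ)
    (q p : Fin n → ℝ) : ℝ :=
  ∑ i, (pd (fun q' => f q' p) q i * pd (g q) p i -
        pd (fun q' => g q' p) q i * pd (f q) p i)

open Finset

section PartialDerivative

variable {k : ℕ}

@[simp]
lemma pd_const (c : ℝ) (x : Fin k → ℝ) (i : Fin k) : pd (fun _ => c) x i = 0 := by
  simp [pd]

@[simp]
lemma pd_const_mul (c : ℝ) (f : (Fin k → ℝ) → ℝ) (x : Fin k → ℝ) (i : Fin k) :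
    pd (fun y => c * f y) x i = c * pd f x i :=
  deriv_const_mul_field c

@[simp]
lemma pd_neg (f : (Fin k → ℝ) → ℝ) (x : Fin k → ℝ) (i : Fin k) :
    pd (fun y => -f y) x i = -pd f x i :=
  deriv.neg

lemma pd_sum_apply (g : Fin k → ℝ → ℝ) (x : Fin k → ℝ) (i : Fin k) :
    pd (fun y => ∑ j, g j (y j)) x i = deriv (g i) (x i) := by
  simp only [pd, Function.apply_update g, sum_update_of_mem (mem_univ i)]
  exact deriv_add_const _

lemma DifferentiableAt.comp_update {f : (Fin k → ℝ) → ℝ} {x : Fin k → ℝ}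
    (hf : DifferentiableAt ℝ f x) (i : Fin k) :
    DifferentiableAt ℝ (fun t => f (Function.update x i t)) (x i) :=
  DifferentiableAt.comp (x i) (by rwa [Function.update_eq_self])
    (hasDerivAt_update x i (x i)).differentiableAt

lemma pd_add {f g : (Fin k → ℝ) → ℝ} {x : Fin k → ℝ} (hf : DifferentiableAt ℝ f x)
    (hg : DifferentiableAt ℝ g x) (i : Fin k) :
    pd (fun y => f y + g y) x i = pd f x i + pd g x i :=
  deriv_add (hf.comp_update i) (hg.comp_update i)

lemma pd_sub {f g : (Fin k → ℝ) → ℝ} {x : Fin k → ℝ} (hf : DifferentiableAt ℝ f x)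
    (hg : DifferentiableAt ℝ g x) (i : Fin k) :
    pd (fun y => f y - g y) x i = pd f x i - pd g x i :=
  deriv_sub (hf.comp_update i) (hg.comp_update i)

lemma pd_mul {f g : (Fin k → ℝ) → ℝ} {x : Fin k → ℝ} (hf : DifferentiableAt ℝ f x)
    (hg : DifferentiableAt ℝ g x) (i : Fin k) :
    pd (fun y => f y * g y) x i = pd f x i * g x + f x * pd g x i := by
  rw [pd, deriv_fun_mul (hf.comp_update i) (hg.comp_update i), Function.update_eq_self]
  rfl

@[simp]
lemma pd_sum_sq (x : Fin k → ℝ) (i : Fin k) : pd (fun y => ∑ j, y j ^ 2) x i = 2 * x i := by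
  rw [pd_sum_apply (fun _ t => t ^ 2) x i, deriv_pow_field]
  norm_num

@[simp]
lemma pd_sum_mul_const (v x : Fin k → ℝ) (i : Fin k) :
    pd (fun y => ∑ j, y j * v j) x i = v i := by
  simpa using pd_sum_apply (fun j t => t * v j) x i

@[simp]
lemma pd_sum_const_mul (v x : Fin k → ℝ) (i : Fin k) :
    pd (fun y => ∑ j, v j * y j) x i = v i := by
  simpa using pd_sum_apply (fun j t => v j * t) x i

end PartialDerivative

section PoissonBracket

variable {n : ℕ}

def SeparatelyDifferentiable (f : (Fin n → ℝ) → (Fin n → ℝ) → ℝ) : Prop :=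
  (∀ p, Differentiable ℝ (f · p)) ∧ ∀ q, Differentiable ℝ (f q)

lemma SeparatelyDifferentiable.mul {f g : (Fin n → ℝ) → (Fin n → ℝ) → ℝ}
    (hf : SeparatelyDifferentiable f) (hg : SeparatelyDifferentiable g) :
    SeparatelyDifferentiable (f * g) :=
  ⟨fun p => (hf.1 p).mul (hg.1 p), fun q => (hf.2 q).mul (hg.2 q)⟩

lemma SeparatelyDifferentiable.const_smul {f : (Fin n → ℝ) → (Fin n → ℝ) → ℝ}
    (hf : SeparatelyDifferentiable f) (c : ℝ) : SeparatelyDifferentiable (c • f) :=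
  ⟨fun p => (hf.1 p).const_smul c, fun q => (hf.2 q).const_smul c⟩

lemma pbracket_comm (f g : (Fin n → ℝ) → (Fin n → ℝ) → ℝ) (q p : Fin n → ℝ) :
    pbracket n f g q p = -pbracket n g f q p := by
  rw [pbracket, pbracket, ← sum_neg_distrib]
  exact sum_congr rfl fun _ _ => by ring

lemma pbracket_self (f : (Fin n → ℝ) → (Fin n → ℝ) → ℝ) (q p : Fin n → ℝ) :
    pbracket n f f q p = 0 := by
  linarith [pbracket_comm f f q p]

variable {f g h : (Fin n → ℝ) → (Fin n → ℝ) → ℝ}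

lemma pbracket_sub_left (hf : SeparatelyDifferentiable f) (hg : SeparatelyDifferentiable g)
    (q p : Fin n → ℝ) :
    pbracket n (f - g) h q p = pbracket n f h q p - pbracket n g h q p := by
  simp only [pbracket, Pi.sub_apply, Pi.sub_def, ← sum_sub_distrib,
    pd_sub (hf.1 p).differentiableAt (hg.1 p).differentiableAt,
    pd_sub (hf.2 q).differentiableAt (hg.2 q).differentiableAt]
  exact sum_congr rfl fun _ _ => by ring

lemma pbracket_mul_left (hf : SeparatelyDifferentiable f) (hg : SeparatelyDifferentiable g)
    (q p : Fin n → ℝ) :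
    pbracket n (f * g) h q p = f q p * pbracket n g h q p + g q p * pbracket n f h q p := by
  simp only [pbracket, Pi.mul_apply, Pi.mul_def, mul_sum, ← sum_add_distrib,
    pd_mul (hf.1 p).differentiableAt (hg.1 p).differentiableAt,
    pd_mul (hf.2 q).differentiableAt (hg.2 q).differentiableAt]
  exact sum_congr rfl fun _ _ => by ring

lemma pbracket_add_right (hg : SeparatelyDifferentiable g) (hh : SeparatelyDifferentiable h)
    (q p : Fin n → ℝ) :
    pbracket n f (g + h) q p = pbracket n f g q p + pbracket n f h q p := by
  simp only [pbracket, Pi.add_apply, Pi.add_def, ← sum_add_distrib,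
    pd_add (hg.1 p).differentiableAt (hh.1 p).differentiableAt,
    pd_add (hg.2 q).differentiableAt (hh.2 q).differentiableAt]
  exact sum_congr rfl fun _ _ => by ring

lemma pbracket_smul_right (c : ℝ) (q p : Fin n → ℝ) :
    pbracket n f (c • g) q p = c * pbracket n f g q p := by
  simp only [pbracket, Pi.smul_apply, Pi.smul_def, smul_eq_mul, pd_const_mul, mul_sum]
  exact sum_congr rfl fun _ _ => by ring

end PoissonBracket

lemma sum_sum_eq_sum_diag_add_sum_lt {ι M : Type*} [Fintype ι] [LinearOrder ι] [AddCommMonoid M]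
    (F : ι → ι → M) :
    ∑ i, ∑ j, F i j = ∑ i, F i i + ∑ i, ∑ j, if i < j then F i j + F j i else 0 := by
  have split : ∀ i j, F i j = (if i = j then F i j else 0) +
      ((if i < j then F i j else 0) + (if j < i then F i j else 0)) := by
    intro i j
    rcases lt_trichotomy i j with h | rfl | h
    · simp [h, h.ne, h.not_gt]
    · simp
    · simp [h, h.ne', h.not_gt]
  calc ∑ i, ∑ j, F i j
      = ∑ i, ∑ j, ((if i = j then F i j else 0) +
          ((if i < j then F i j else 0) + (if j < i then F i j else 0))) :=
        sum_congr rfl fun i _ => sum_congr rfl fun j _ => split i j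
    _ = ∑ i, F i i +
          (∑ i, ∑ j, (if i < j then F i j else 0) + ∑ i, ∑ j, if j < i then F i j else 0) := by
        simp only [sum_add_distrib, sum_ite_eq, mem_univ, if_true]
    _ = ∑ i, F i i + ∑ i, ∑ j, if i < j then F i j + F j i else 0 := by
        rw [sum_comm (f := fun i j => if j < i then F i j else 0), ← sum_add_distrib]
        simp only [← sum_add_distrib, ite_add_ite, add_zero]

lemma sum_sq_mul_sum_sq_sub_sq_sum_mul {ι R : Type*} [Fintype ι] [LinearOrder ι] [CommRing R]
    (f g : ι → R) :
    (∑ i, f i ^ 2) * (∑ i, g i ^ 2) - (∑ i, f i * g i) ^ 2 =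
      ∑ i, ∑ j, if i < j then (f i * g j - f j * g i) ^ 2 else 0 := by
  rw [sq (∑ i, f i * g i), sum_mul_sum, sum_mul_sum, ← sum_sub_distrib]
  simp_rw [← sum_sub_distrib]
  have diag : ∀ i, f i ^ 2 * g i ^ 2 - f i * g i * (f i * g i) = 0 := fun i => by ring
  rw [sum_sum_eq_sum_diag_add_sum_lt]
  simp only [diag, sum_const_zero, zero_add]
  exact sum_congr rfl fun i _ => sum_congr rfl fun j _ => by congr 1; ring

namespace Oscillator

variable (n : ℕ)

noncomputable def h₁ : (Fin n → ℝ) → (Fin n → ℝ) → ℝ := fun q _ => (1 / 2) * ∑ i, q i ^ 2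

noncomputable def h₂ : (Fin n → ℝ) → (Fin n → ℝ) → ℝ := fun q p => -((1 / 2) * ∑ i, q i * p i)

noncomputable def h₃ : (Fin n → ℝ) → (Fin n → ℝ) → ℝ := fun _ p => (1 / 2) * ∑ i, p i ^ 2

noncomputable def casimir : (Fin n → ℝ) → (Fin n → ℝ) → ℝ := h₁ n * h₃ n - h₂ n * h₂ n

lemma separatelyDifferentiable_h₁ : SeparatelyDifferentiable (h₁ n) :=
  ⟨fun _ => by unfold h₁; fun_prop, fun _ => differentiable_const _⟩

lemma separatelyDifferentiable_h₂ : SeparatelyDifferentiable (h₂ n) :=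
  ⟨fun _ => by unfold h₂; fun_prop, fun _ => by unfold h₂; fun_prop⟩

lemma separatelyDifferentiable_h₃ : SeparatelyDifferentiable (h₃ n) :=
  ⟨fun _ => differentiable_const _, fun _ => by unfold h₃; fun_prop⟩

variable {n} (q p : Fin n → ℝ) (i : Fin n)

@[simp]
lemma pd_h₁_left : pd (fun q' => h₁ n q' p) q i = q i := by
  simp only [h₁, pd_const_mul, pd_sum_sq]
  ring

@[simp]
lemma pd_h₁_right : pd (h₁ n q) p i = 0 :=
  pd_const _ p i

@[simp]
lemma pd_h₂_left : pd (fun q' => h₂ n q' p) q i = -(p i / 2) := by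
  simp only [h₂, pd_neg, pd_const_mul, pd_sum_mul_const]
  ring

@[simp]
lemma pd_h₂_right : pd (h₂ n q) p i = -(q i / 2) := by
  unfold h₂
  simp only [pd_neg, pd_const_mul, pd_sum_const_mul]
  ring

@[simp]
lemma pd_h₃_left : pd (fun q' => h₃ n q' p) q i = 0 :=
  pd_const _ q i

@[simp]
lemma pd_h₃_right : pd (h₃ n q) p i = p i := by
  unfold h₃
  simp only [pd_const_mul, pd_sum_sq]
  ring

lemma pbracket_h₁_h₂ : pbracket n (h₁ n) (h₂ n) q p = -h₁ n q p := by
  simp only [pbracket, pd_h₁_left, pd_h₁_right, pd_h₂_left, pd_h₂_right]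
  simp only [h₁, mul_sum, ← sum_neg_distrib]
  exact sum_congr rfl fun _ _ => by ring

lemma pbracket_h₁_h₃ : pbracket n (h₁ n) (h₃ n) q p = -2 * h₂ n q p := by
  simp only [pbracket, pd_h₁_left, pd_h₁_right, pd_h₃_left, pd_h₃_right]
  simp only [h₂, mul_sum, ← sum_neg_distrib]
  exact sum_congr rfl fun _ _ => by ring

lemma pbracket_h₂_h₃ : pbracket n (h₂ n) (h₃ n) q p = -h₃ n q p := by
  simp only [pbracket, pd_h₂_left, pd_h₂_right, pd_h₃_left, pd_h₃_right]
  simp only [h₃, mul_sum, ← sum_neg_distrib]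
  exact sum_congr rfl fun _ _ => by ring

lemma pbracket_casimir (h : (Fin n → ℝ) → (Fin n → ℝ) → ℝ) :
    pbracket n (casimir n) h q p =
      h₁ n q p * pbracket n (h₃ n) h q p + h₃ n q p * pbracket n (h₁ n) h q p
        - 2 * h₂ n q p * pbracket n (h₂ n) h q p := by
  have h₁d := separatelyDifferentiable_h₁ n
  have h₂d := separatelyDifferentiable_h₂ n
  have h₃d := separatelyDifferentiable_h₃ n
  rw [casimir, pbracket_sub_left (h₁d.mul h₃d) (h₂d.mul h₂d), pbracket_mul_left h₁d h₃d,
    pbracket_mul_left h₂d h₂d]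
  ring

lemma pbracket_casimir_h₁ : pbracket n (casimir n) (h₁ n) q p = 0 := by
  rw [pbracket_casimir, pbracket_self, pbracket_comm (h₂ n), pbracket_comm (h₃ n), pbracket_h₁_h₂,
    pbracket_h₁_h₃]
  ring

lemma pbracket_casimir_h₂ : pbracket n (casimir n) (h₂ n) q p = 0 := by
  rw [pbracket_casimir, pbracket_self, pbracket_comm (h₃ n), pbracket_h₁_h₂, pbracket_h₂_h₃]
  ring

lemma pbracket_casimir_h₃ : pbracket n (casimir n) (h₃ n) q p = 0 := by
  rw [pbracket_casimir, pbracket_self, pbracket_h₁_h₃, pbracket_h₂_h₃]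
  ring

lemma casimir_eq_sum_sq_angularMomentum :
    casimir n q p = (1 / 4) * ∑ i, ∑ j, if i < j then (q i * p j - q j * p i) ^ 2 else 0 := by
  rw [← sum_sq_mul_sum_sq_sub_sq_sum_mul]
  simp only [casimir, h₁, h₂, h₃, Pi.sub_apply, Pi.mul_apply]
  ring

end Oscillator

theorem oscillator_angular_momentum_invariant_general (n : ℕ)
    (ω : ℝ → ℝ)
    (h1 h2 h3 I : (Fin n → ℝ) → (Fin n → ℝ) → ℝ)
    (hh1 : h1 = fun q _ => (1 / 2) * ∑ i, (q i) ^ 2)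
    (hh2 : h2 = fun q p => -((1 / 2) * ∑ i, q i * p i))
    (hh3 : h3 = fun _ p => (1 / 2) * ∑ i, (p i) ^ 2)
    (hI : I = fun q p => (1 / 4) * ∑ i : Fin n, ∑ j : Fin n,
      if i < j then (q i * p j - q j * p i) ^ 2 else 0) :
    (∀ q' p' : ℝ, ((q' ^ 2) / 2) * ((p' ^ 2) / 2) - (-(q' * p') / 2) ^ 2 = 0) ∧
    (∀ q p : Fin n → ℝ, h1 q p * h3 q p - (h2 q p) ^ 2 = I q p) ∧
    (∀ q p : Fin n → ℝ, pbracket n I h1 q p = 0) ∧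
    (∀ q p : Fin n → ℝ, pbracket n I h2 q p = 0) ∧
    (∀ q p : Fin n → ℝ, pbracket n I h3 q p = 0) ∧
    (∀ (t : ℝ) (q p : Fin n → ℝ),
      pbracket n I (fun q' p' => h3 q' p' + (ω t) ^ 2 * h1 q' p') q p = 0) := by
  obtain rfl : h1 = Oscillator.h₁ n := hh1
  obtain rfl : h2 = Oscillator.h₂ n := hh2
  obtain rfl : h3 = Oscillator.h₃ n := hh3
  obtain rfl : I = Oscillator.casimir n :=
    hI.trans (funext₂ fun q p => (Oscillator.casimir_eq_sum_sq_angularMomentum q p).symm)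
  refine ⟨fun _ _ => by ring, fun q p => by rw [sq]; rfl, Oscillator.pbracket_casimir_h₁,
    Oscillator.pbracket_casimir_h₂, Oscillator.pbracket_casimir_h₃, fun t q p => ?_⟩
  change pbracket n _ (Oscillator.h₃ n + (ω t) ^ 2 • Oscillator.h₁ n) q p = 0
  rw [pbracket_add_right (Oscillator.separatelyDifferentiable_h₃ n)
      ((Oscillator.separatelyDifferentiable_h₁ n).const_smul _), pbracket_smul_right,
    Oscillator.pbracket_casimir_h₃, Oscillator.pbracket_casimir_h₁, mul_zero, add_zero]

/-- For the `t`-dependent harmonic oscillator: in one dimension the function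
`I = h₁h₃ − h₂²` (with `h₁ = q²/2`, `h₂ = −qp/2`, `h₃ = p²/2`) vanishes
identically; in dimension `n ≥ 2`, `I = (1/4)∑_{i<j}(q_i p_j − q_j p_i)²`
equals `h₁h₃ − h₂²` and Poisson-commutes with `h₁ = (1/2)∑ q_i²`,
`h₂ = −(1/2)∑ q_i p_i`, `h₃ = (1/2)∑ p_i²`, hence also with the `t`-dependent
oscillator Hamiltonian `h₃ + ω(t)² h₁`, i.e. it is a `t`-independent constant
of the motion. -/
theorem oscillator_angular_momentum_invariant (n : ℕ) (hn : 2 ≤ n)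
    (ω : ℝ → ℝ)
    (h1 h2 h3 I : (Fin n → ℝ) → (Fin n → ℝ) → ℝ)
    (hh1 : h1 = fun q _ => (1 / 2) * ∑ i, (q i) ^ 2)
    (hh2 : h2 = fun q p => -((1 / 2) * ∑ i, q i * p i))
    (hh3 : h3 = fun _ p => (1 / 2) * ∑ i, (p i) ^ 2)
    (hI : I = fun q p => (1 / 4) * ∑ i : Fin n, ∑ j : Fin n,
      if i < j then (q i * p j - q j * p i) ^ 2 else 0) :
    (∀ q' p' : ℝ, ((q' ^ 2) / 2) * ((p' ^ 2) / 2) - (-(q' * p') / 2) ^ 2 = 0) ∧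
    (∀ q p : Fin n → ℝ, h1 q p * h3 q p - (h2 q p) ^ 2 = I q p) ∧
    (∀ q p : Fin n → ℝ, pbracket n I h1 q p = 0) ∧
    (∀ q p : Fin n → ℝ, pbracket n I h2 q p = 0) ∧
    (∀ q p : Fin n → ℝ, pbracket n I h3 q p = 0) ∧
    (∀ (t : ℝ) (q p : Fin n → ℝ),
      pbracket n I (fun q' p' => h3 q' p' + (ω t) ^ 2 * h1 q' p') q p = 0) :=
  oscillator_angular_momentum_invariant_general n ω h1 h2 h3 I hh1 hh2 hh3 hI
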